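/- arXiv:2205.08575 — 7 statements merged into one kernel-verified Lean document; each statement's English description precedes it below -/
import Mathlib

section
/- Let A, K ⊆ ℝⁿ be closed convex sets containing the origin and let r > 0. Then the Hausdorff distance between A ∩ rB and K ∩ rB equals sup_{x ∈ rB} |d(x, A) − d(x, K)|. -/
open Metric
open scoped RealInnerProductSpace

lemma dist_smul_le_aux {n : ℕ} {x a : EuclideanSpace ℝ (Fin n)} {r : ℝ} (hr : 0 < r)
    (hx : ‖x‖ ≤ r) (ha : r < ‖a‖) : dist x ((r / ‖a‖) • a) ≤ dist x a := by
  have hna : (0:ℝ) < ‖a‖ := lt_trans hr ha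
  set t : ℝ := r / ‖a‖ with ht
  have ht0 : 0 < t := div_pos hr hna
  have ht1 : t < 1 := (div_lt_one hna).2 ha
  have hinner : (inner ℝ x a : ℝ) ≤ ‖x‖ * ‖a‖ := real_inner_le_norm x a
  have hxa : (inner ℝ x a : ℝ) ≤ t * ‖a‖^2 := by
    have heq : t * ‖a‖ = r := by rw [ht]; field_simp
    nlinarith [norm_nonneg a]
  rw [dist_eq_norm, dist_eq_norm]
  have h1 : ‖x - t • a‖^2 ≤ ‖x - a‖^2 := by
    rw [norm_sub_sq_real, norm_sub_sq_real, real_inner_smul_right, norm_smul,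
      Real.norm_eq_abs, abs_of_pos ht0, mul_pow]
    nlinarith [mul_le_mul_of_nonneg_left hxa (by linarith : (0:ℝ) ≤ 1 - t), mul_nonneg (sq_nonneg (1 - t)) (sq_nonneg ‖a‖)]
  nlinarith [norm_nonneg (x - t • a), norm_nonneg (x - a)]

lemma infDist_inter_closedBall_eq {n : ℕ} {A : Set (EuclideanSpace ℝ (Fin n))}
    (hAconv : Convex ℝ A) (hA0 : (0 : EuclideanSpace ℝ (Fin n)) ∈ A) {r : ℝ} (hr : 0 < r)
    {x : EuclideanSpace ℝ (Fin n)} (hx : x ∈ Metric.closedBall 0 r) :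
    Metric.infDist x (A ∩ Metric.closedBall 0 r) = Metric.infDist x A := by
  have hne : (A ∩ Metric.closedBall 0 r).Nonempty :=
    ⟨0, hA0, Metric.mem_closedBall_self hr.le⟩
  have hstep : ∀ a ∈ A, Metric.infDist x (A ∩ Metric.closedBall 0 r) ≤ dist x a := by
    intro a ha
    rcases le_or_gt ‖a‖ r with h | h
    · exact Metric.infDist_le_dist_of_mem
        ⟨ha, by simpa [Metric.mem_closedBall, dist_zero_right] using h⟩
    · have hxn : ‖x‖ ≤ r := by simpa [Metric.mem_closedBall, dist_zero_right] using hx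
      have hna : (0:ℝ) < ‖a‖ := lt_trans hr h
      have ht0 : 0 ≤ r / ‖a‖ := (div_pos hr hna).le
      have ht1 : r / ‖a‖ ≤ 1 := (div_le_one hna).2 h.le
      have hmem : (r / ‖a‖) • a ∈ A := by
        have := hAconv hA0 ha (by linarith : (0:ℝ) ≤ 1 - r / ‖a‖) ht0 (by ring)
        simpa using this
      have hball : (r / ‖a‖) • a ∈ Metric.closedBall (0 : EuclideanSpace ℝ (Fin n)) r := by
        rw [Metric.mem_closedBall, dist_zero_right, norm_smul, Real.norm_eq_abs,
          abs_of_nonneg ht0]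
        rw [div_mul_eq_mul_div, mul_div_assoc, div_self hna.ne']
        simp
      calc Metric.infDist x (A ∩ Metric.closedBall 0 r) ≤ dist x ((r / ‖a‖) • a) :=
            Metric.infDist_le_dist_of_mem ⟨hmem, hball⟩
        _ ≤ dist x a := dist_smul_le_aux hr hxn h
  refine le_antisymm ?_ (Metric.infDist_le_infDist_of_subset Set.inter_subset_left hne)
  by_contra hlt
  push_neg at hlt
  obtain ⟨a, ha, hda⟩ := (Metric.infDist_lt_iff ⟨0, hA0⟩).1 hlt
  exact absurd (hstep a ha) (not_le.2 hda)

theorem hausdorffDist_inter_ball_eq_sup {n : ℕ} (A K : Set (EuclideanSpace ℝ (Fin n)))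
    (hA : IsClosed A) (hAconv : Convex ℝ A) (hA0 : (0 : EuclideanSpace ℝ (Fin n)) ∈ A)
    (hK : IsClosed K) (hKconv : Convex ℝ K) (hK0 : (0 : EuclideanSpace ℝ (Fin n)) ∈ K)
    (r : ℝ) (hr : 0 < r) :
    Metric.hausdorffDist (A ∩ Metric.closedBall 0 r) (K ∩ Metric.closedBall 0 r)
      = sSup ((fun x => |Metric.infDist x A - Metric.infDist x K|) ''
          Metric.closedBall (0 : EuclideanSpace ℝ (Fin n)) r) := by
  set P := A ∩ Metric.closedBall (0 : EuclideanSpace ℝ (Fin n)) r with hP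
  set Q := K ∩ Metric.closedBall (0 : EuclideanSpace ℝ (Fin n)) r with hQ
  have h0r : (0 : EuclideanSpace ℝ (Fin n)) ∈ Metric.closedBall (0 : EuclideanSpace ℝ (Fin n)) r :=
    Metric.mem_closedBall_self hr.le
  have hPne : P.Nonempty := ⟨0, hA0, h0r⟩
  have hQne : Q.Nonempty := ⟨0, hK0, h0r⟩
  have hPb : Bornology.IsBounded P :=
    (Metric.isBounded_closedBall).subset Set.inter_subset_right
  have hQb : Bornology.IsBounded Q :=
    (Metric.isBounded_closedBall).subset Set.inter_subset_right
  have hfin : EMetric.hausdorffEdist P Q ≠ ⊤ :=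
    Metric.hausdorffEdist_ne_top_of_nonempty_of_bounded hPne hQne hPb hQb
  set f : EuclideanSpace ℝ (Fin n) → ℝ := fun x => |Metric.infDist x A - Metric.infDist x K|
  set S := f '' Metric.closedBall (0 : EuclideanSpace ℝ (Fin n)) r with hS
  have hbdd : BddAbove S := by
    refine ⟨r, ?_⟩
    rintro _ ⟨x, hx, rfl⟩
    have hxr : dist x 0 ≤ r := hx
    have h1 : Metric.infDist x A ≤ r := le_trans (Metric.infDist_le_dist_of_mem hA0) hxr
    have h2 : Metric.infDist x K ≤ r := le_trans (Metric.infDist_le_dist_of_mem hK0) hxr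
    have h3 := Metric.infDist_nonneg (x := x) (s := A)
    have h4 := Metric.infDist_nonneg (x := x) (s := K)
    rw [abs_sub_le_iff]; constructor <;> linarith
  have hkey : ∀ x ∈ Metric.closedBall (0 : EuclideanSpace ℝ (Fin n)) r,
      Metric.infDist x P = Metric.infDist x A ∧ Metric.infDist x Q = Metric.infDist x K :=
    fun x hx => ⟨infDist_inter_closedBall_eq hAconv hA0 hr hx,
      infDist_inter_closedBall_eq hKconv hK0 hr hx⟩
  have h0S : (0 : ℝ) ∈ S := by
    refine ⟨0, h0r, ?_⟩
    simp [f, Metric.infDist_zero_of_mem hA0, Metric.infDist_zero_of_mem hK0]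
  have hSnonneg : 0 ≤ sSup S := le_csSup hbdd h0S
  refine le_antisymm ?_ ?_
  · refine Metric.hausdorffDist_le_of_infDist hSnonneg ?_ ?_
    · rintro x ⟨hxA, hxr⟩
      have h := hkey x hxr
      have : Metric.infDist x Q = f x := by
        rw [h.2]
        simp [f, Metric.infDist_zero_of_mem hxA, abs_of_nonneg, Metric.infDist_nonneg]
      rw [this]
      exact le_csSup hbdd ⟨x, hxr, rfl⟩
    · rintro x ⟨hxK, hxr⟩
      have h := hkey x hxr
      have : Metric.infDist x P = f x := by
        rw [h.1]
        simp [f, Metric.infDist_zero_of_mem hxK, abs_of_nonneg, Metric.infDist_nonneg]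
      rw [this]
      exact le_csSup hbdd ⟨x, hxr, rfl⟩
  · refine Real.sSup_le ?_ Metric.hausdorffDist_nonneg
    rintro _ ⟨x, hx, rfl⟩
    have h := hkey x hx
    have h1 : Metric.infDist x P ≤ Metric.infDist x Q + Metric.hausdorffDist Q P :=
      Metric.infDist_le_infDist_add_hausdorffDist (by rw [EMetric.hausdorffEdist_comm]; exact hfin)
    have h2 : Metric.infDist x Q ≤ Metric.infDist x P + Metric.hausdorffDist P Q :=
      Metric.infDist_le_infDist_add_hausdorffDist hfin
    rw [Metric.hausdorffDist_comm] at h1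
    simp only [f]
    rw [← h.1, ← h.2, abs_sub_le_iff]
    constructor <;> linarith
end

section
/- Let A be a closed convex subset of ℝⁿ containing the origin. Then A° = A if and only if A is the closed Euclidean unit ball B. -/
open Pointwise

def polar {n : ℕ} (A : Set (EuclideanSpace ℝ (Fin n))) : Set (EuclideanSpace ℝ (Fin n)) :=
  {x | ∀ a ∈ A, inner ℝ a x ≤ (1:ℝ)}

lemma polar_ball {n : ℕ} :
    polar (Metric.closedBall (0 : EuclideanSpace ℝ (Fin n)) 1)
      = Metric.closedBall (0 : EuclideanSpace ℝ (Fin n)) 1 := by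
  ext x
  simp only [polar, Set.mem_setOf_eq, Metric.mem_closedBall, dist_zero_right]
  constructor
  · intro h
    by_cases hx : x = 0
    · simp [hx]
    · have hxn : (0:ℝ) < ‖x‖ := norm_pos_iff.mpr hx
      have := h (‖x‖⁻¹ • x) (by
        simp [norm_smul, abs_of_nonneg (inv_nonneg.mpr hxn.le), inv_mul_cancel₀ hxn.ne'])
      rw [real_inner_smul_left, real_inner_self_eq_norm_sq] at this
      calc ‖x‖ = ‖x‖⁻¹ * (‖x‖ * ‖x‖) := by field_simp
        _ ≤ 1 := by rwa [pow_two] at this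
  · intro hx a ha
    calc inner ℝ a x ≤ ‖a‖ * ‖x‖ := real_inner_le_norm a x
      _ ≤ 1 * 1 := by
          apply mul_le_mul ha hx (norm_nonneg _) zero_le_one
      _ = 1 := one_mul 1

theorem polar_eq_self_iff_unitBall {n : ℕ} (A : Set (EuclideanSpace ℝ (Fin n)))
    (hA : IsClosed A) (hconv : Convex ℝ A) (h0 : (0 : EuclideanSpace ℝ (Fin n)) ∈ A) :
    polar A = A ↔ A = Metric.closedBall (0 : EuclideanSpace ℝ (Fin n)) 1 := by
  constructor
  · intro h
    have hsub : A ⊆ Metric.closedBall 0 1 := by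
      intro x hx
      have hx' : x ∈ polar A := h.symm ▸ hx
      have : inner ℝ x x ≤ (1:ℝ) := hx' x hx
      rw [real_inner_self_eq_norm_sq] at this
      rw [Metric.mem_closedBall, dist_zero_right]
      nlinarith [norm_nonneg x]
    have hanti : polar (Metric.closedBall (0 : EuclideanSpace ℝ (Fin n)) 1) ⊆ polar A :=
      fun x hx a ha => hx a (hsub ha)
    rw [polar_ball, h] at hanti
    exact Set.Subset.antisymm hsub hanti
  · intro h
    rw [h, polar_ball]
end

section
/- Let a ∈ ℝⁿ be nonzero and t > 0. Then the polar of the set [0,a]° + tB equals the segment [0, a/(1 + t‖a‖)], i.e. ([0,a]° + tB)° = {s·a/(1 + t‖a‖) : s ∈ [0,1]}. -/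
open Pointwise

private lemma aux_nonpos (s : ℝ) (h : ∀ R : ℝ, 0 < R → R * s ≤ 1) : s ≤ 0 := by
  by_contra h'
  push_neg at h'
  have := h (2 / s) (by positivity)
  rw [div_mul_cancel₀ _ (ne_of_gt h')] at this
  linarith

theorem polar_segment_polar_add_ball {n : ℕ} (a : EuclideanSpace ℝ (Fin n)) (ha : a ≠ 0)
    (t : ℝ) (ht : 0 < t) :
    polar (polar (segment ℝ (0 : EuclideanSpace ℝ (Fin n)) a) +
        Metric.closedBall (0 : EuclideanSpace ℝ (Fin n)) t)
      = segment ℝ (0 : EuclideanSpace ℝ (Fin n)) ((1 + t * ‖a‖)⁻¹ • a) := by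
  have hna : (0:ℝ) < ‖a‖ := norm_pos_iff.mpr ha
  have hden : (0:ℝ) < 1 + t * ‖a‖ := by positivity
  have hmemp : ∀ y : EuclideanSpace ℝ (Fin n), inner ℝ a y ≤ (1:ℝ) →
      y ∈ polar (segment ℝ (0 : EuclideanSpace ℝ (Fin n)) a) := by
    intro y hy p hp
    obtain ⟨u, v, hu, hv, huv, rfl⟩ := hp
    have : (inner ℝ (u • (0 : EuclideanSpace ℝ (Fin n)) + v • a) y : ℝ)
        = v * inner ℝ a y := by
      rw [inner_add_left, real_inner_smul_left, real_inner_smul_left, inner_zero_left]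
      ring
    rw [this]
    rcases le_or_gt (inner ℝ a y : ℝ) 0 with h | h
    · nlinarith
    · nlinarith
  ext x
  constructor
  · intro hx
    have key : ∀ y b : EuclideanSpace ℝ (Fin n), inner ℝ a y ≤ (1:ℝ) → ‖b‖ ≤ t →
        (inner ℝ (y + b) x : ℝ) ≤ 1 := by
      intro y b hy hb
      exact hx _ (Set.add_mem_add (hmemp y hy) (by simpa [Metric.mem_closedBall] using hb))
    set c : ℝ := (inner ℝ a x : ℝ) / ‖a‖ ^ 2 with hc
    set w : EuclideanSpace ℝ (Fin n) := x - c • a with hw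
    have haw : (inner ℝ a w : ℝ) = 0 := by
      rw [hw, inner_sub_right, real_inner_smul_right, real_inner_self_eq_norm_sq]
      rw [hc, div_mul_cancel₀ _ (by positivity), sub_self]
    have hwx : (inner ℝ w x : ℝ) = ‖w‖ ^ 2 := by
      have : x = w + c • a := by rw [hw]; abel
      have hwa : (inner ℝ w a : ℝ) = 0 := by rw [real_inner_comm]; exact haw
      rw [this, inner_add_right, real_inner_smul_right, real_inner_self_eq_norm_sq, hwa]
      ring
    have hw0 : w = 0 := by
      have h1 : ∀ R : ℝ, 0 < R → R * (inner ℝ w x : ℝ) ≤ 1 := by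
        intro R hR
        have := key (R • w) 0 (by rw [real_inner_smul_right, haw]; simp) (by simp [le_of_lt ht])
        rwa [add_zero, real_inner_smul_left] at this
      have := aux_nonpos _ h1
      rw [hwx] at this
      have : ‖w‖ = 0 := by nlinarith [sq_nonneg ‖w‖, norm_nonneg w]
      simpa using this
    have hxca : x = c • a := by
      have := hw0
      rw [hw, sub_eq_zero] at this
      exact this
    have hax : (inner ℝ a x : ℝ) = c * ‖a‖ ^ 2 := by
      rw [hc]; field_simp
    have hc0 : 0 ≤ c := by
      have h1 : ∀ R : ℝ, 0 < R → R * (-(c * ‖a‖ ^ 2)) ≤ 1 := by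
        intro R hR
        have := key (-(R • a)) 0
          (by rw [inner_neg_right, real_inner_smul_right, real_inner_self_eq_norm_sq]
              nlinarith) (by simp [le_of_lt ht])
        rw [add_zero, inner_neg_left, real_inner_smul_left, hax] at this
        linarith
      have := aux_nonpos _ h1
      nlinarith [pow_pos hna 2]
    have hcle : c * (1 + t * ‖a‖) ≤ 1 := by
      have := key ((‖a‖ ^ 2)⁻¹ • a) ((t / ‖a‖) • a)
        (by rw [real_inner_smul_right, real_inner_self_eq_norm_sq]
            rw [inv_mul_cancel₀ (by positivity)])
        (by rw [norm_smul]
            rw [Real.norm_eq_abs, abs_of_nonneg (by positivity)]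
            exact (div_mul_cancel₀ _ (ne_of_gt hna)).le)
      rw [inner_add_left, real_inner_smul_left, real_inner_smul_left, hax]
        at this
      have e : (‖a‖ ^ 2)⁻¹ * (c * ‖a‖ ^ 2) + t / ‖a‖ * (c * ‖a‖ ^ 2)
          = c * (1 + t * ‖a‖) := by field_simp
      linarith [e ▸ this]
    refine ⟨1 - c * (1 + t * ‖a‖), c * (1 + t * ‖a‖), by linarith,
      by positivity, by ring, ?_⟩
    rw [smul_zero, zero_add, smul_smul, hxca]
    congr 1
    field_simp
  · rintro ⟨u, s, hu, hs, husum, rfl⟩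
    intro z hz
    obtain ⟨y, hy, b, hb, rfl⟩ := hz
    have hay : (inner ℝ a y : ℝ) ≤ 1 := by
      have := hy a ⟨0, 1, le_refl 0, zero_le_one, by ring, by simp⟩
      exact this
    have hbn : ‖b‖ ≤ t := by simpa [Metric.mem_closedBall] using hb
    have hba : (inner ℝ b a : ℝ) ≤ t * ‖a‖ := by
      calc (inner ℝ b a : ℝ) ≤ ‖b‖ * ‖a‖ := real_inner_le_norm b a
        _ ≤ t * ‖a‖ := by nlinarith [norm_nonneg b]
    have hs1 : s ≤ 1 := by linarith
    rw [smul_zero, zero_add, smul_smul, real_inner_smul_right, inner_add_left]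
    have hya : (inner ℝ y a : ℝ) ≤ 1 := by rwa [real_inner_comm]
    have hfac : (0:ℝ) ≤ s * (1 + t * ‖a‖)⁻¹ := by positivity
    calc s * (1 + t * ‖a‖)⁻¹ * ((inner ℝ y a : ℝ) + (inner ℝ b a : ℝ))
        ≤ s * (1 + t * ‖a‖)⁻¹ * (1 + t * ‖a‖) := by
          apply mul_le_mul_of_nonneg_left (by linarith) hfac
      _ = s := by field_simp
      _ ≤ 1 := hs1
end

section
/- Let A ⊆ ℝⁿ be a closed convex set containing the origin and let t ∈ (0, 1/2). Then the polar of the set ψ_t(A°) := (A° + tB) ∩ ((1−t)/t)B is contained in (A + (t/(1−t))B) ∩ (1/t)B. In particular ψ_t(A°)° ⊆ A + (t/(1−t))B. -/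
open Pointwise

lemma norm_le_of_inner_le {n : ℕ} (y : EuclideanSpace ℝ (Fin n)) (s : ℝ) (hs : 0 < s)
    (h : ∀ b : EuclideanSpace ℝ (Fin n), ‖b‖ ≤ s → inner ℝ b y ≤ (1:ℝ)) : ‖y‖ ≤ 1 / s := by
  by_cases hy : y = 0
  · simp [hy]; positivity
  · have hny : (0:ℝ) < ‖y‖ := norm_pos_iff.mpr hy
    have hb : ‖(s / ‖y‖) • y‖ ≤ s := by
      rw [norm_smul, Real.norm_eq_abs, abs_of_pos (div_pos hs hny), div_mul_cancel₀ _ hny.ne']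
    have h2 := h _ hb
    rw [real_inner_smul_left, real_inner_self_eq_norm_sq] at h2
    have hE : s / ‖y‖ * ‖y‖ ^ 2 = s * ‖y‖ := by field_simp
    rw [hE] at h2
    rw [le_div_iff₀ hs]
    linarith

theorem polar_psi_subset {n : ℕ} (A : Set (EuclideanSpace ℝ (Fin n)))
    (hA : IsClosed A) (hconv : Convex ℝ A) (h0 : (0 : EuclideanSpace ℝ (Fin n)) ∈ A)
    (t : ℝ) (ht0 : 0 < t) (ht : t < 1 / 2) :
    polar ((polar A + Metric.closedBall (0 : EuclideanSpace ℝ (Fin n)) t) ∩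
        Metric.closedBall (0 : EuclideanSpace ℝ (Fin n)) ((1 - t) / t))
      ⊆ (A + Metric.closedBall (0 : EuclideanSpace ℝ (Fin n)) (t / (1 - t))) ∩
          Metric.closedBall (0 : EuclideanSpace ℝ (Fin n)) (1 / t) := by
  have h1t : (0:ℝ) < 1 - t := by linarith
  set s : ℝ := t / (1 - t) with hs_def
  have hs : 0 < s := div_pos ht0 h1t
  have hr : (0:ℝ) < (1 - t) / t := div_pos h1t ht0
  have hsr : 1 / s = (1 - t) / t := by rw [hs_def, one_div_div]
  have h0polar : (0 : EuclideanSpace ℝ (Fin n)) ∈ polar A := by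
    intro a _; simp [polar]
  intro x hx
  simp only [polar, Set.mem_setOf_eq] at hx
  -- membership of small ball elements in the intersection set
  have hball : ∀ b : EuclideanSpace ℝ (Fin n), ‖b‖ ≤ t →
      b ∈ (polar A + Metric.closedBall (0 : EuclideanSpace ℝ (Fin n)) t) ∩
        Metric.closedBall (0 : EuclideanSpace ℝ (Fin n)) ((1 - t) / t) := by
    intro b hb
    constructor
    · exact ⟨0, h0polar, b, by simpa [Metric.mem_closedBall, dist_zero_right] using hb, by simp⟩
    · rw [Metric.mem_closedBall, dist_zero_right]
      have : t ≤ (1 - t) / t := by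
        rw [le_div_iff₀ ht0]; nlinarith
      linarith
  constructor
  · -- x ∈ A + sB via separation
    by_contra hxs
    set C := A + Metric.closedBall (0 : EuclideanSpace ℝ (Fin n)) s with hC
    have hCclosed : IsClosed C := by
      have := IsClosed.add_left_of_isCompact hA
        (isCompact_closedBall (0 : EuclideanSpace ℝ (Fin n)) s)
      rwa [add_comm] at this
    have hCconv : Convex ℝ C := hconv.add (convex_closedBall _ _)
    obtain ⟨f, u, hfC, hfx⟩ := geometric_hahn_banach_closed_point hCconv hCclosed hxs
    have hu : 0 < u := by
      have h0C : (0 : EuclideanSpace ℝ (Fin n)) ∈ C :=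
        ⟨0, h0, 0, by simp [hs.le], by simp⟩
      have := hfC 0 h0C
      simpa using this
    set y : EuclideanSpace ℝ (Fin n) :=
      (InnerProductSpace.toDual ℝ (EuclideanSpace ℝ (Fin n))).symm (u⁻¹ • f) with hy_def
    have hyz : ∀ z : EuclideanSpace ℝ (Fin n), (inner ℝ y z : ℝ) = u⁻¹ * f z := by
      intro z; rw [hy_def, InnerProductSpace.toDual_symm_apply]; simp
    have hyC : ∀ z ∈ C, (inner ℝ y z : ℝ) ≤ 1 := by
      intro z hz
      rw [hyz]
      rw [inv_mul_le_iff₀ hu, mul_one]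
      exact (hfC z hz).le
    -- y ∈ polar A
    have hyA : y ∈ polar A := by
      intro a ha
      have : a ∈ C := ⟨a, ha, 0, by simp [hs.le], by simp⟩
      rw [real_inner_comm]
      exact hyC a this
    -- ‖y‖ ≤ (1-t)/t
    have hynorm : ‖y‖ ≤ (1 - t) / t := by
      rw [← hsr]
      apply norm_le_of_inner_le y s hs
      intro b hb
      have : b ∈ C := ⟨0, h0, b, by simpa [Metric.mem_closedBall, dist_zero_right] using hb,
        by simp⟩
      rw [real_inner_comm]
      exact hyC b this
    -- y is in the intersection set, so ⟪y,x⟫ ≤ 1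
    have hle := hx y ⟨⟨y, hyA, 0, by simp [ht0.le], by simp⟩,
      by rwa [Metric.mem_closedBall, dist_zero_right]⟩
    rw [hyz] at hle
    rw [inv_mul_le_iff₀ hu, mul_one] at hle
    linarith
  · -- ‖x‖ ≤ 1/t
    rw [Metric.mem_closedBall, dist_zero_right]
    exact norm_le_of_inner_le x t ht0 fun b hb => hx b (hball b hb)
end

section
/- Let A ⊆ ℝⁿ be a closed convex set containing the origin and let t ∈ (0,1). Define κ_t(A) as the closed convex hull of (⋃_{a ∈ A} [0, a/(1 + t‖a‖)]) ∪ tB, and ψ_t(K) = (K + tB) ∩ ((1−t)/t)B for K ⊆ ℝⁿ. Then κ_t(A) ⊆ (ψ_t(A°))°. -/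
open Pointwise

theorem kappa_subset_polar_psi {n : ℕ} (A : Set (EuclideanSpace ℝ (Fin n)))
    (hA : IsClosed A) (hconv : Convex ℝ A) (h0 : (0 : EuclideanSpace ℝ (Fin n)) ∈ A)
    (t : ℝ) (ht0 : 0 < t) (ht1 : t < 1) :
    closure (convexHull ℝ
        ((⋃ a ∈ A, segment ℝ (0 : EuclideanSpace ℝ (Fin n)) ((1 + t * ‖a‖)⁻¹ • a)) ∪
          Metric.closedBall (0 : EuclideanSpace ℝ (Fin n)) t))
      ⊆ polar ((polar A + Metric.closedBall (0 : EuclideanSpace ℝ (Fin n)) t) ∩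
          Metric.closedBall (0 : EuclideanSpace ℝ (Fin n)) ((1 - t) / t)) := by
  set T := (polar A + Metric.closedBall (0 : EuclideanSpace ℝ (Fin n)) t) ∩
      Metric.closedBall (0 : EuclideanSpace ℝ (Fin n)) ((1 - t) / t) with hTdef
  have hTconv : Convex ℝ (polar T) := by
    intro x hx y hy u v hu hv huv a ha
    have hax := hx a ha
    have hay := hy a ha
    have : (inner ℝ a (u • x + v • y) : ℝ) = u * inner ℝ a x + v * inner ℝ a y := by
      simp [inner_add_right, inner_smul_right]
    rw [this]
    calc u * inner ℝ a x + v * inner ℝ a y ≤ u * 1 + v * 1 :=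
          add_le_add (mul_le_mul_of_nonneg_left hax hu) (mul_le_mul_of_nonneg_left hay hv)
      _ = 1 := by linarith
  have hTclosed : IsClosed (polar T) := by
    have : polar T = ⋂ a ∈ T, {x : EuclideanSpace ℝ (Fin n) | inner ℝ a x ≤ (1:ℝ)} := by
      ext x; simp [polar]
    rw [this]
    exact isClosed_biInter fun a _ =>
      isClosed_le ((innerSL ℝ a).continuous) continuous_const
  have hsub : ((⋃ a ∈ A, segment ℝ (0 : EuclideanSpace ℝ (Fin n)) ((1 + t * ‖a‖)⁻¹ • a)) ∪
      Metric.closedBall (0 : EuclideanSpace ℝ (Fin n)) t) ⊆ polar T := by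
    rintro x (hx | hx)
    · simp only [Set.mem_iUnion] at hx
      obtain ⟨a, ha, hseg⟩ := hx
      rw [segment_eq_image] at hseg
      obtain ⟨s, ⟨hs0, hs1⟩, rfl⟩ := hseg
      intro y hy
      obtain ⟨⟨p, hp, q, hq, rfl⟩, _⟩ := hy
      simp only [Metric.mem_closedBall, dist_zero_right] at hq
      have hden : (0:ℝ) < 1 + t * ‖a‖ :=
        lt_of_lt_of_le one_pos (le_add_of_nonneg_right (by positivity))
      have hpa : (inner ℝ (p + q) a : ℝ) ≤ 1 + t * ‖a‖ := by
        have h1 : (inner ℝ p a : ℝ) ≤ 1 := by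
          rw [real_inner_comm]; exact hp a ha
        have h2 : (inner ℝ q a : ℝ) ≤ t * ‖a‖ := by
          calc (inner ℝ q a : ℝ) ≤ ‖q‖ * ‖a‖ := real_inner_le_norm q a
            _ ≤ t * ‖a‖ := by gcongr
        rw [inner_add_left]; linarith
      have : (inner ℝ (p + q) ((1 - s) • (0:EuclideanSpace ℝ (Fin n)) + s • ((1 + t * ‖a‖)⁻¹ • a)) : ℝ)
          = s * ((1 + t * ‖a‖)⁻¹ * inner ℝ (p + q) a) := by
        simp [inner_add_right, inner_smul_right]
      rw [this]
      have h3 : (1 + t * ‖a‖)⁻¹ * (inner ℝ (p + q) a : ℝ) ≤ 1 := by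
        rw [inv_mul_le_iff₀ hden, mul_one]; exact hpa
      calc s * ((1 + t * ‖a‖)⁻¹ * (inner ℝ (p + q) a : ℝ)) ≤ s * 1 :=
            mul_le_mul_of_nonneg_left h3 hs0
        _ ≤ 1 := by linarith
    · intro y hy
      obtain ⟨-, hy2⟩ := hy
      simp only [Metric.mem_closedBall, dist_zero_right] at hx hy2
      calc (inner ℝ y x : ℝ) ≤ ‖y‖ * ‖x‖ := real_inner_le_norm y x
        _ ≤ (1 - t) / t * t := by
            apply mul_le_mul hy2 hx (norm_nonneg x)
            exact div_nonneg (by linarith) ht0.le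
        _ = 1 - t := div_mul_cancel₀ _ (ne_of_gt ht0)
        _ ≤ 1 := by linarith
  exact closure_minimal (convexHull_min hsub hTconv) hTclosed
end

section
/- Let f : ℝⁿ → ℝⁿ be a map and T a linear isomorphism of ℝⁿ. If the image f([0,x]) equals the segment [0, T(x)] for every x ∈ ℝⁿ, then f = T. -/
/-! Since `0 ∈ [0, x]` maps onto `[0, 0] = {0}`, we get `f 0 = 0`. For `x ≠ 0`, the endpoint `T x`
is attained as `f (b • x)` with `0 ≤ b ≤ 1`; applying the hypothesis to `b • x` puts
`T x = f (b • x)` in `[0, b • T x]`, i.e. `T x = (d * b) • T x` with `0 ≤ d ≤ 1`, which forces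
`d = b = 1`. -/

open Set

section
variable {𝕜 E F : Type*} [Field 𝕜] [LinearOrder 𝕜] [IsStrictOrderedRing 𝕜]
  [AddCommGroup E] [Module 𝕜 E] [AddCommGroup F] [Module 𝕜 F]

theorem segment_zero_left_eq_image (x : E) : segment 𝕜 0 x = (· • x) '' Icc (0 : 𝕜) 1 := by
  simpa using segment_eq_image' 𝕜 0 x

theorem eq_one_of_mem_segment_zero_smul [NoZeroSMulDivisors 𝕜 E] {v : E} (hv : v ≠ 0) {b : 𝕜}
    (hb : b ≤ 1) (h : v ∈ segment 𝕜 0 (b • v)) : b = 1 := by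
  rw [segment_zero_left_eq_image] at h
  obtain ⟨d, ⟨hd₀, hd₁⟩, hdv⟩ := h
  have hdb : d * b = 1 := smul_left_injective 𝕜 hv (by simpa [mul_smul] using hdv)
  have hd : d = 1 := le_antisymm hd₁ (hdb ▸ mul_le_of_le_one_right hd₀ hb)
  simpa [hd] using hdb

theorem apply_eq_of_image_segment_zero [NoZeroSMulDivisors 𝕜 F] {f : E → F} {T : E →ₗ[𝕜] F}
    (hT : Function.Injective T) (hf : ∀ x, f '' segment 𝕜 0 x = segment 𝕜 0 (T x)) (x : E) :
    f x = T x := by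
  rcases eq_or_ne x 0 with rfl | hx
  · simpa [segment_same] using hf 0
  obtain ⟨y, hy, hfy⟩ : T x ∈ f '' segment 𝕜 0 x := hf x ▸ right_mem_segment 𝕜 0 (T x)
  rw [segment_zero_left_eq_image] at hy
  obtain ⟨b, ⟨-, hb₁⟩, rfl⟩ := hy
  have hmem : f (b • x) ∈ segment 𝕜 0 (T (b • x)) :=
    hf _ ▸ mem_image_of_mem f (right_mem_segment 𝕜 0 (b • x))
  rw [hfy, map_smul] at hmem
  have hTx : T x ≠ 0 := (map_ne_zero_iff T hT).2 hx
  obtain rfl := eq_one_of_mem_segment_zero_smul hTx hb₁ hmem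
  simpa using hfy

end

theorem eq_of_image_segment {n : ℕ}
    (f : EuclideanSpace ℝ (Fin n) → EuclideanSpace ℝ (Fin n))
    (T : EuclideanSpace ℝ (Fin n) ≃ₗ[ℝ] EuclideanSpace ℝ (Fin n))
    (hf : ∀ x : EuclideanSpace ℝ (Fin n),
      f '' segment ℝ (0 : EuclideanSpace ℝ (Fin n)) x
        = segment ℝ (0 : EuclideanSpace ℝ (Fin n)) (T x)) :
    ∀ x, f x = T x :=
  apply_eq_of_image_segment_zero (T := T.toLinearMap) T.injective hf
end

section
/- Let A ⊆ ℝⁿ be a closed convex set containing the ball ε₀B for some ε₀ > 0, and let K ⊆ ℝⁿ be a closed convex set. Let j ≥ 1 be an integer with ε₀ ≤ 1/j. If sup_{‖x‖ < j} |d(x, A) − d(x, K)| < ε₀, then 0 ∈ K. -/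
theorem zero_mem_of_close {n : ℕ} (A K : Set (EuclideanSpace ℝ (Fin n)))
    (hA : IsClosed A) (hAconv : Convex ℝ A)
    (hK : IsClosed K) (hKconv : Convex ℝ K) (hKne : K.Nonempty)
    (ε₀ : ℝ) (hε₀ : 0 < ε₀)
    (hball : Metric.closedBall (0 : EuclideanSpace ℝ (Fin n)) ε₀ ⊆ A)
    (j : ℕ) (hj : 1 ≤ j) (hεj : ε₀ ≤ 1 / j)
    (hsup : sSup ((fun x => |Metric.infDist x A - Metric.infDist x K|) ''
        Metric.ball (0 : EuclideanSpace ℝ (Fin n)) j) < ε₀) :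
    (0 : EuclideanSpace ℝ (Fin n)) ∈ K := by
  have hj1 : (1:ℝ) ≤ (j:ℝ) := by exact_mod_cast hj
  have hεj' : ε₀ ≤ 1 := le_trans hεj (by rw [div_le_one (by linarith)]; exact hj1)
  have h0A : (0 : EuclideanSpace ℝ (Fin n)) ∈ A :=
    hball (by simp [Metric.mem_closedBall, hε₀.le])
  have hdA0 : Metric.infDist (0 : EuclideanSpace ℝ (Fin n)) A = 0 :=
    Metric.infDist_zero_of_mem h0A
  -- bounded above
  have hbdd : BddAbove ((fun x => |Metric.infDist x A - Metric.infDist x K|) ''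
      Metric.ball (0 : EuclideanSpace ℝ (Fin n)) j) := by
    refine ⟨2 * j + Metric.infDist 0 K, ?_⟩
    rintro y ⟨x, hx, rfl⟩
    have hx' : dist x (0 : EuclideanSpace ℝ (Fin n)) < j := Metric.mem_ball.mp hx
    have h1 : Metric.infDist x A ≤ Metric.infDist 0 A + dist x 0 :=
      Metric.infDist_le_infDist_add_dist
    have h2 : Metric.infDist x K ≤ Metric.infDist 0 K + dist x 0 :=
      Metric.infDist_le_infDist_add_dist
    have hA0 := Metric.infDist_nonneg (x := x) (s := A)
    have hK0 := Metric.infDist_nonneg (x := x) (s := K)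
    have hK0' := Metric.infDist_nonneg (x := (0 : EuclideanSpace ℝ (Fin n))) (s := K)
    rw [hdA0] at h1
    rw [abs_le]
    constructor <;> nlinarith
  have key : ∀ x : EuclideanSpace ℝ (Fin n), x ∈ Metric.ball (0 : EuclideanSpace ℝ (Fin n)) j →
      |Metric.infDist x A - Metric.infDist x K| < ε₀ := by
    intro x hx
    exact lt_of_le_of_lt (le_csSup hbdd ⟨x, hx, rfl⟩) hsup
  -- distance from 0 to K is small
  have h0ball : (0 : EuclideanSpace ℝ (Fin n)) ∈ Metric.ball (0 : EuclideanSpace ℝ (Fin n)) j :=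
    Metric.mem_ball_self (by linarith)
  have hdK0 : Metric.infDist (0 : EuclideanSpace ℝ (Fin n)) K < ε₀ := by
    have := key 0 h0ball
    rw [hdA0] at this
    have hK0 := Metric.infDist_nonneg (x := (0 : EuclideanSpace ℝ (Fin n))) (s := K)
    rw [abs_sub_lt_iff] at this
    linarith [this.2]
  obtain ⟨p, hpK, hpd⟩ := hK.exists_infDist_eq_dist hKne (0 : EuclideanSpace ℝ (Fin n))
  by_contra h0K
  have hp0 : p ≠ 0 := by rintro rfl; exact h0K hpK
  have hpn : 0 < ‖p‖ := norm_pos_iff.mpr hp0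
  have hpnorm : Metric.infDist (0 : EuclideanSpace ℝ (Fin n)) K = ‖p‖ := by
    rw [hpd, dist_eq_norm, zero_sub, norm_neg]
  have hpε : ‖p‖ < ε₀ := hpnorm ▸ hdK0
  -- variational inequality: ∀ k ∈ K, ⟪p, k⟫ ≥ ‖p‖²
  have hvar : ∀ k ∈ K, (‖p‖:ℝ)^2 ≤ inner ℝ p k := by
    intro k hk
    have hc : ∀ t : ℝ, 0 < t → t ≤ 1 →
        0 ≤ 2 * (inner ℝ p (k - p) : ℝ) + t * ‖k - p‖^2 := by
      intro t ht ht1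
      have hq : (1 - t) • p + t • k ∈ K := hKconv hpK hk (by linarith) ht.le (by ring)
      have hle : ‖p‖ ≤ ‖(1 - t) • p + t • k‖ := by
        have := Metric.infDist_le_dist_of_mem (x := (0 : EuclideanSpace ℝ (Fin n))) hq
        rw [hpnorm, dist_eq_norm, zero_sub, norm_neg] at this
        exact this
      have hexp : (1 - t) • p + t • k = p + t • (k - p) := by
        simp [smul_sub]; module
      rw [hexp] at hle
      have hsq : ‖p‖^2 ≤ ‖p + t • (k - p)‖^2 := by nlinarith [norm_nonneg p, hle]
      have hexpand : ‖p + t • (k - p)‖^2 =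
          ‖p‖^2 + 2 * t * inner ℝ p (k - p) + t^2 * ‖k - p‖^2 := by
        rw [@norm_add_sq_real]
        rw [real_inner_smul_right, norm_smul, Real.norm_eq_abs, abs_of_pos ht]
        ring
      rw [hexpand] at hsq
      nlinarith
    have hge : (0:ℝ) ≤ inner ℝ p (k - p) := by
      by_contra hneg
      push_neg at hneg
      set c : ℝ := (inner ℝ p (k - p) : ℝ) with hc_def
      have hb : 0 < ‖k - p‖^2 + 1 := by positivity
      have ht : 0 < min 1 (-c / (‖k - p‖^2 + 1)) := by
        apply lt_min one_pos
        apply div_pos (by linarith) hb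
      have := hc _ ht (min_le_left _ _)
      have h2 : min 1 (-c / (‖k - p‖^2 + 1)) * ‖k - p‖^2 ≤
          (-c / (‖k - p‖^2 + 1)) * ‖k - p‖^2 := by
        apply mul_le_mul_of_nonneg_right (min_le_right _ _) (by positivity)
      have h3 : (-c / (‖k - p‖^2 + 1)) * ‖k - p‖^2 < -c := by
        rw [div_mul_eq_mul_div, div_lt_iff₀ hb]
        nlinarith
      linarith
    have : inner ℝ p (k - p) = (inner ℝ p k : ℝ) - ‖p‖^2 := by
      rw [inner_sub_right, real_inner_self_eq_norm_sq]
    linarith [this ▸ hge]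
  -- the witness point
  set s : ℝ := ε₀ - ‖p‖ / 2 with hs_def
  have hs_pos : 0 < s := by simp only [hs_def]; linarith
  have hs_le : s ≤ ε₀ := by simp only [hs_def]; linarith
  set w : EuclideanSpace ℝ (Fin n) := (-(s / ‖p‖)) • p with hw_def
  clear_value s w
  have hwnorm : ‖w‖ = s := by
    rw [hw_def, norm_smul, Real.norm_eq_abs, abs_neg, abs_of_pos (by positivity)]
    field_simp
  have hwball : w ∈ Metric.ball (0 : EuclideanSpace ℝ (Fin n)) j := by
    rw [Metric.mem_ball, dist_eq_norm, sub_zero, hwnorm]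
    have h1 : (1:ℝ)/j ≤ j := by
      rw [div_le_iff₀ (by linarith)]; nlinarith
    have h2 : s < ε₀ := by rw [hs_def]; linarith
    linarith
  have hwA : w ∈ A := by
    apply hball
    rw [Metric.mem_closedBall, dist_eq_norm, sub_zero, hwnorm]
    exact hs_le
  have hwdA : Metric.infDist w A = 0 := Metric.infDist_zero_of_mem hwA
  have hwdK : s + ‖p‖ ≤ Metric.infDist w K := by
    obtain ⟨k, hk, hwk⟩ := hK.exists_infDist_eq_dist hKne w
    rw [hwk]
    have hinner : (s + ‖p‖) * ‖p‖ ≤ inner ℝ (k - w) p := by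
      rw [hw_def, inner_sub_left, real_inner_smul_left]
      have h1 := hvar k hk
      have h2 : (inner ℝ k p : ℝ) = inner ℝ p k := (real_inner_comm k p).symm
      have h3 : (inner ℝ p p : ℝ) = ‖p‖^2 := real_inner_self_eq_norm_sq p
      rw [h3]
      have : -(s / ‖p‖) * ‖p‖^2 = -(s * ‖p‖) := by field_simp
      rw [this]
      have expand : (s + ‖p‖) * ‖p‖ = s * ‖p‖ + ‖p‖^2 := by ring
      linarith
    have hcs : (inner ℝ (k - w) p : ℝ) ≤ ‖k - w‖ * ‖p‖ := real_inner_le_norm _ _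
    have : (s + ‖p‖) * ‖p‖ ≤ ‖k - w‖ * ‖p‖ := le_trans hinner hcs
    have hkw : s + ‖p‖ ≤ ‖k - w‖ := by
      have := (mul_le_mul_iff_of_pos_right hpn).mp this
      exact this
    rw [dist_eq_norm, norm_sub_rev w k]
    exact hkw
  have hkey := key w hwball
  rw [hwdA, abs_sub_lt_iff] at hkey
  obtain ⟨-, h2⟩ := hkey
  linarith
end
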